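/- Let 𝔅 be a basis of the Brauer algebra B_l(εn) = End_G(V^{⊗l}). For 1 ≤ l ≤ r, the set {E_{IJ} ∘ b^J : b ∈ 𝔅, I, J ⊆ {1,...,r}, #I = #J = l} is a basis of B(ε,n,r)_l. -/

import Mathlib

open Finset Matrix

namespace EnhancedBrauer

/- Coordinates: `V = ℂⁿ` with a nondegenerate bilinear form of matrix `Q`; the enhanced space
`V̲ = V ⊕ ℂη` is `ℂ^{n+1}`, the index `Fin.last n` playing the role of `η`.  The enhanced
tensor power `V̲^{⊗r}` is `(Fin r → Fin (n+1)) → ℂ`, and its linear endomorphisms are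
matrices indexed by `Fin r → Fin (n+1)` (acting by `mulVec`/`mulVecLin`).  For
`I ⊆ {1,…,r}`, the summand `V̲_I^{⊗r}` is spanned by the basis indices `k` with
`k i ≠ Fin.last n` exactly for `i ∈ I`. -/

/-- Coordinate matrix of the diagonal action of `g` on the `m`-th tensor power of `ℂ^N`. -/
noncomputable def PhiMat {N m : ℕ} (g : Matrix (Fin N) (Fin N) ℂ) :
    Matrix (Fin m → Fin N) (Fin m → Fin N) ℂ :=
  fun k q => ∏ i, g (k i) (q i)

/-- Coordinate matrix of the place-permutation action of `s ∈ 𝔖_m`. -/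
noncomputable def PsiMat {N m : ℕ} (s : Equiv.Perm (Fin m)) :
    Matrix (Fin m → Fin N) (Fin m → Fin N) ℂ :=
  fun k q => if q = k ∘ s then 1 else 0

/-- The index `k` has support exactly `I` (i.e. the corresponding basis vector of the
enhanced tensor power lies in `V̲_I^{⊗r}`). -/
def isSupp {n r : ℕ} (I : Finset (Fin r)) (k : Fin r → Fin (n + 1)) : Prop :=
  ∀ i, i ∈ I ↔ k i ≠ Fin.last n

/-- The number of tensor factors of the basis index `k` coming from `V` (and not `η`). -/
def levelOf {n r : ℕ} (k : Fin r → Fin (n + 1)) : ℕ :=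
  (Finset.univ.filter fun i => k i ≠ Fin.last n).card

/-- The basis index of `V̲_I^{⊗r}` whose `V`-entries are given by `a : Fin l → Fin n`,
arranged along the increasing enumeration of `I`. -/
noncomputable def emb {n r l : ℕ} (I : Finset (Fin r)) (hI : I.card = l)
    (a : Fin l → Fin n) : Fin r → Fin (n + 1) :=
  fun i => if h : i ∈ I then Fin.castSucc (a ((I.orderIsoOfFin hI).symm ⟨i, h⟩)) else Fin.last n

/-- The operator `σ^I` acting as `σ = A` on `V̲_I^{⊗r} ≅ V^{⊗l}` and as `0` on every other
summand `V̲_K^{⊗r}`. -/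
noncomputable def opMat {n r l : ℕ} (I : Finset (Fin r)) (hI : I.card = l)
    (A : Matrix (Fin l → Fin n) (Fin l → Fin n) ℂ) :
    Matrix (Fin r → Fin (n + 1)) (Fin r → Fin (n + 1)) ℂ :=
  fun k q => ∑ a : Fin l → Fin n, ∑ b : Fin l → Fin n,
    if k = emb I hI a ∧ q = emb I hI b then A a b else 0

/-- The operator `E_{I,J}`: the order-preserving place permutation carrying `V̲_J^{⊗r}`
onto `V̲_I^{⊗r}`, extended by zero on all other summands. -/
noncomputable def EMat {n r l : ℕ} (I J : Finset (Fin r)) (hI : I.card = l)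
    (hJ : J.card = l) :
    Matrix (Fin r → Fin (n + 1)) (Fin r → Fin (n + 1)) ℂ :=
  fun k q => ∑ a : Fin l → Fin n, if k = emb I hI a ∧ q = emb J hJ a then 1 else 0

/-- The Brauer algebra `B_l(εn) = End_G(V^{⊗l})`: all matrices commuting with the diagonal
action of the isometry group `G` of the form with matrix `Q`. -/
def BrauerSet (n l : ℕ) (Q : Matrix (Fin n) (Fin n) ℂ) :
    Set (Matrix (Fin l → Fin n) (Fin l → Fin n) ℂ) :=
  {A | ∀ g : Matrix (Fin n) (Fin n) ℂ, gᵀ * Q * g = Q → PhiMat g * A = A * PhiMat g}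

/-- The restriction `Ψ̲|_l(s)` of the place permutation action to the level-`l` summand
`V̲_l^{⊗r}`, extended by zero on the other levels. -/
noncomputable def PsiLevel {n r : ℕ} (l : ℕ) (s : Equiv.Perm (Fin r)) :
    Matrix (Fin r → Fin (n + 1)) (Fin r → Fin (n + 1)) ℂ :=
  fun k q => if levelOf (n := n) k = l ∧ q = k ∘ s then 1 else 0

/-- The enhanced Brauer algebra `B(ε,n,r)`: the (non-unital) subalgebra of
`End_ℂ(V̲^{⊗r})` generated by `Ψ(𝔖_r)` and all `σ^I` with `σ ∈ B_{#I}(εn)`. -/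
noncomputable def enhancedBrauer (n r : ℕ) (Q : Matrix (Fin n) (Fin n) ℂ) :
    NonUnitalSubalgebra ℂ (Matrix (Fin r → Fin (n + 1)) (Fin r → Fin (n + 1)) ℂ) :=
  NonUnitalAlgebra.adjoin ℂ
    ({M | ∃ s : Equiv.Perm (Fin r), M = PsiMat s} ∪
      {M | ∃ I : Finset (Fin r), ∃ A ∈ BrauerSet n I.card Q, M = opMat I rfl A})

/-- The level-`l` piece `B(ε,n,r)_l`: the (non-unital) subalgebra of `End_ℂ(V̲^{⊗r})`
generated by `Ψ̲|_l(𝔖_r)` and all `σ^I` with `#I = l`, `σ ∈ B_l(εn)`. -/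
noncomputable def enhancedBrauerLevel (n r : ℕ) (Q : Matrix (Fin n) (Fin n) ℂ) (l : ℕ) :
    NonUnitalSubalgebra ℂ (Matrix (Fin r → Fin (n + 1)) (Fin r → Fin (n + 1)) ℂ) :=
  NonUnitalAlgebra.adjoin ℂ
    ({M | ∃ s : Equiv.Perm (Fin r), M = PsiLevel l s} ∪
      {M | ∃ I : Finset (Fin r), ∃ hI : I.card = l, ∃ A ∈ BrauerSet n l Q,
        M = opMat I hI A})

/-! Write `P_I : V^{⊗l} ≅ V̲_I^{⊗r} ↪ V̲^{⊗r}` for the inclusion of a summand. Then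
`E_{IJ} ∘ B^J = P_I B P_Jᵀ` and `P_Jᵀ P_K = δ_{JK}`, so these operators multiply like matrix units
tensored with `B_l(εn)`, and compressing by `P_Kᵀ (·) P_L` separates them, which gives linear
independence. Their span is therefore closed under products; it contains the generators
`σ^I = P_I σ P_Iᵀ` and `Ψ̲|_l(s) = ∑_I P_I Ψ(τ_I) P_{s⁻¹I}ᵀ`, where `τ_I ∈ 𝔖_l` is the permutation
that `s` induces on the `V`-factors of `V̲_I^{⊗r}`; conversely `E_{IJ} b^J = Ψ̲|_l(s) (Ψ(τ_I)⁻¹ b)^J`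
for any `s` with `s⁻¹ I = J`. -/

variable {n r l : ℕ}

section Emb

variable (I : Finset (Fin r)) (hI : I.card = l)

lemma emb_of_mem (a : Fin l → Fin n) {i : Fin r} (h : i ∈ I) :
    emb I hI a i = (a ((I.orderIsoOfFin hI).symm ⟨i, h⟩)).castSucc := dif_pos h

lemma emb_of_notMem (a : Fin l → Fin n) {i : Fin r} (h : i ∉ I) :
    emb I hI a i = Fin.last n := dif_neg h

lemma emb_orderIsoOfFin (a : Fin l → Fin n) (j : Fin l) :
    emb I hI a (I.orderIsoOfFin hI j) = (a j).castSucc := by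
  rw [emb_of_mem I hI a (I.orderIsoOfFin hI j).2, Subtype.coe_eta, OrderIso.symm_apply_apply]

lemma isSupp_emb (a : Fin l → Fin n) : isSupp I (emb I hI a) := fun i => by
  by_cases h : i ∈ I
  · simp [h, emb_of_mem I hI a h, Fin.castSucc_ne_last]
  · simp [h, emb_of_notMem I hI a h]

lemma eq_emb_iff {k : Fin r → Fin (n + 1)} {a : Fin l → Fin n} :
    k = emb I hI a ↔ isSupp I k ∧ ∀ j, k (I.orderIsoOfFin hI j) = (a j).castSucc := by
  refine ⟨by rintro rfl; exact ⟨isSupp_emb I hI a, emb_orderIsoOfFin I hI a⟩, ?_⟩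
  rintro ⟨hk, hval⟩
  funext i
  by_cases h : i ∈ I
  · obtain ⟨j, rfl⟩ : ∃ j, I.orderIsoOfFin hI j = i := ⟨_, congrArg Subtype.val
      ((I.orderIsoOfFin hI).apply_symm_apply ⟨i, h⟩)⟩
    rw [hval, emb_orderIsoOfFin]
  · rw [emb_of_notMem I hI a h]
    simpa using mt (hk i).2 h

lemma exists_eq_emb {k : Fin r → Fin (n + 1)} (hk : isSupp I k) : ∃ a, k = emb I hI a :=
  ⟨fun j => (k (I.orderIsoOfFin hI j)).castPred ((hk _).1 (I.orderIsoOfFin hI j).2),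
    (eq_emb_iff I hI).2 ⟨hk, fun j => by simp⟩⟩

lemma emb_injective : Function.Injective (emb (n := n) I hI) := fun a a' h => funext fun j =>
  Fin.castSucc_injective _ <| by rw [← emb_orderIsoOfFin I hI, h, emb_orderIsoOfFin]

end Emb

lemma isSupp.unique {I J : Finset (Fin r)} {k : Fin r → Fin (n + 1)} (hI : isSupp I k)
    (hJ : isSupp J k) : I = J :=
  Finset.ext fun i => (hI i).trans (hJ i).symm

lemma levelOf_eq_card {I : Finset (Fin r)} {k : Fin r → Fin (n + 1)} (hk : isSupp I k) :
    levelOf k = I.card := by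
  rw [levelOf]
  congr 1
  ext i
  simp [hk i]

lemma eq_of_emb_eq_emb {I J : Finset (Fin r)} {hI : I.card = l} {hJ : J.card = l}
    {a c : Fin l → Fin n} (h : emb I hI a = emb J hJ c) : I = J :=
  (isSupp_emb I hI a).unique (h ▸ isSupp_emb J hJ c)

section Block

variable (n) in
noncomputable def inclMat (I : Finset (Fin r)) (hI : I.card = l) :
    Matrix (Fin r → Fin (n + 1)) (Fin l → Fin n) ℂ :=
  Matrix.of fun k a => if k = emb I hI a then 1 else 0

/-- `E_{IJ} ∘ B^J` in the paper's notation; `P_I` above is `inclMat n I hI`. -/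
noncomputable def blockMat (I J : Finset (Fin r)) (hI : I.card = l) (hJ : J.card = l) :
    Matrix (Fin l → Fin n) (Fin l → Fin n) ℂ →ₗ[ℂ]
      Matrix (Fin r → Fin (n + 1)) (Fin r → Fin (n + 1)) ℂ :=
  mulLeftLinearMap _ ℂ (inclMat n I hI) ∘ₗ mulRightLinearMap _ ℂ (inclMat n J hJ)ᵀ

variable {I J K L : Finset (Fin r)} {hI : I.card = l} {hJ : J.card = l} {hK : K.card = l}
  {hL : L.card = l}

lemma blockMat_apply (B : Matrix (Fin l → Fin n) (Fin l → Fin n) ℂ) :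
    blockMat I J hI hJ B = inclMat n I hI * B * (inclMat n J hJ)ᵀ := by
  simp [blockMat, Matrix.mul_assoc]

lemma blockMat_apply_apply (B : Matrix (Fin l → Fin n) (Fin l → Fin n) ℂ) (k q) :
    blockMat I J hI hJ B k q =
      ∑ a, ∑ c, if k = emb I hI a ∧ q = emb J hJ c then B a c else 0 := by
  simp only [blockMat_apply, inclMat, mul_apply, transpose_apply, of_apply, Finset.sum_mul]
  rw [Finset.sum_comm]
  refine Finset.sum_congr rfl fun a _ => Finset.sum_congr rfl fun c _ => ?_
  by_cases hk : k = emb I hI a <;> simp [hk]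

lemma blockMat_emb_apply (B : Matrix (Fin l → Fin n) (Fin l → Fin n) ℂ) (a q) :
    blockMat I J hI hJ B (emb I hI a) q = ∑ c, if q = emb J hJ c then B a c else 0 := by
  rw [blockMat_apply_apply, Fintype.sum_eq_single a fun a' ha' => ?_]
  · simp
  · simp [(emb_injective I hI).eq_iff, Ne.symm ha']

lemma blockMat_apply_of_not_isSupp (B : Matrix (Fin l → Fin n) (Fin l → Fin n) ℂ) {k}
    (hk : ¬isSupp I k) (q) : blockMat I J hI hJ B k q = 0 := by
  rw [blockMat_apply_apply]
  refine Finset.sum_eq_zero fun a _ => Finset.sum_eq_zero fun c _ => if_neg ?_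
  rintro ⟨rfl, -⟩
  exact hk (isSupp_emb I hI a)

lemma opMat_eq_blockMat (A : Matrix (Fin l → Fin n) (Fin l → Fin n) ℂ) :
    opMat I hI A = blockMat I I hI hI A := by
  ext k q
  rw [blockMat_apply_apply, opMat]

lemma eMat_eq_blockMat_one : EMat (n := n) I J hI hJ = blockMat I J hI hJ 1 := by
  ext k q
  simp only [blockMat_apply_apply, EMat, one_apply]
  refine Finset.sum_congr rfl fun a _ => ?_
  rw [Fintype.sum_eq_single a fun c hc => by simp [Ne.symm hc]]
  simp

lemma transpose_inclMat_mul_inclMat :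
    (inclMat n J hJ)ᵀ * inclMat n K hK = if J = K then 1 else 0 := by
  ext c d
  simp only [mul_apply, transpose_apply, inclMat, of_apply, mul_ite, mul_one, mul_zero,
    Finset.sum_ite_eq', Finset.mem_univ, if_true]
  by_cases hJK : J = K
  · subst hJK
    simp [(emb_injective J hJ).eq_iff, one_apply, eq_comm]
  · simp only [hJK, if_false, Matrix.zero_apply]
    exact if_neg fun h => hJK (eq_of_emb_eq_emb h).symm

lemma blockMat_mul_blockMat (B B' : Matrix (Fin l → Fin n) (Fin l → Fin n) ℂ) :
    blockMat I J hI hJ B * blockMat K L hK hL B' =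
      if J = K then blockMat I L hI hL (B * B') else 0 := by
  simp only [blockMat_apply, Matrix.mul_assoc]
  rw [← Matrix.mul_assoc (inclMat n J hJ)ᵀ, transpose_inclMat_mul_inclMat]
  split_ifs <;> simp

lemma eMat_mul_opMat (B : Matrix (Fin l → Fin n) (Fin l → Fin n) ℂ) :
    EMat I J hI hJ * opMat J hJ B = blockMat I J hI hJ B := by
  rw [eMat_eq_blockMat_one, opMat_eq_blockMat, blockMat_mul_blockMat, if_pos rfl, Matrix.one_mul]

lemma transpose_inclMat_mul_blockMat_mul_inclMat (B : Matrix (Fin l → Fin n) (Fin l → Fin n) ℂ) :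
    (inclMat n K hK)ᵀ * blockMat I J hI hJ B * inclMat n L hL =
      if K = I ∧ J = L then B else 0 := by
  simp only [blockMat_apply, ← Matrix.mul_assoc, transpose_inclMat_mul_inclMat]
  simp only [Matrix.mul_assoc, transpose_inclMat_mul_inclMat]
  split_ifs <;> simp_all

end Block

theorem _root_.LinearIndependent.of_pi_single {R M N ι κ : Type*} [Ring R] [AddCommGroup M]
    [Module R M] [AddCommGroup N] [Module R N] [DecidableEq κ] {f : ι × κ → M} {g : ι → N}
    (hg : LinearIndependent R g) (φ : κ → M →ₗ[R] N)
    (hφ : ∀ k i k', φ k (f (i, k')) = if k = k' then g i else 0) : LinearIndependent R f := by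
  have hsingle := (Pi.linearIndependent_single (Ms := fun _ : κ => N) (fun _ => g)
    fun _ => hg).comp _
      ((Equiv.prodComm ι κ).trans (Equiv.sigmaEquivProd κ ι).symm).injective
  refine .of_comp (LinearMap.pi φ) ?_
  convert hsingle using 1
  ext p k
  simp [hφ, Pi.single_apply]

variable (r) in
noncomputable def blockFamily {ι : Type*} (b : ι → Matrix (Fin l → Fin n) (Fin l → Fin n) ℂ)
    (p : ι × {I : Finset (Fin r) // I.card = l} × {J : Finset (Fin r) // J.card = l}) :
    Matrix (Fin r → Fin (n + 1)) (Fin r → Fin (n + 1)) ℂ :=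
  blockMat p.2.1.1 p.2.2.1 p.2.1.2 p.2.2.2 (b p.1)

lemma linearIndependent_blockFamily {ι : Type*}
    {b : ι → Matrix (Fin l → Fin n) (Fin l → Fin n) ℂ} (hb : LinearIndependent ℂ b) :
    LinearIndependent ℂ (blockFamily r b) := by
  classical
  refine hb.of_pi_single (fun k => mulLeftLinearMap _ ℂ (inclMat n k.1.1 k.1.2)ᵀ ∘ₗ
    mulRightLinearMap _ ℂ (inclMat n k.2.1 k.2.2)) fun ⟨K, L⟩ i ⟨I, J⟩ => ?_
  simp only [blockFamily, LinearMap.comp_apply, mulRightLinearMap_apply,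
    mulLeftLinearMap_apply, ← Matrix.mul_assoc, transpose_inclMat_mul_blockMat_mul_inclMat]
  simp [Prod.ext_iff, Subtype.ext_iff, eq_comm]

lemma brauerSet_mul {Q : Matrix (Fin n) (Fin n) ℂ} {A B : Matrix (Fin l → Fin n) (Fin l → Fin n) ℂ}
    (hA : A ∈ BrauerSet n l Q) (hB : B ∈ BrauerSet n l Q) : A * B ∈ BrauerSet n l Q :=
  fun g hg => by rw [← Matrix.mul_assoc, hA g hg, Matrix.mul_assoc, hB g hg, Matrix.mul_assoc]

section PsiMat

variable {N m : ℕ}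

lemma psiMat_mul (s t : Equiv.Perm (Fin m)) :
    PsiMat (N := N) s * PsiMat t = PsiMat (s * t) := by
  ext k q
  simp only [PsiMat, mul_apply, ite_mul, one_mul, zero_mul, Finset.sum_ite_eq', Finset.mem_univ,
    if_true, Equiv.Perm.coe_mul, Function.comp_assoc]
  congr

lemma psiMat_one : PsiMat (N := N) (1 : Equiv.Perm (Fin m)) = 1 := by
  ext k q
  simp [PsiMat, one_apply, eq_comm]

lemma phiMat_mul_psiMat (g : Matrix (Fin N) (Fin N) ℂ) (s : Equiv.Perm (Fin m)) :
    PhiMat g * PsiMat s = PsiMat s * PhiMat g := by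
  ext k q
  simp only [PhiMat, PsiMat, mul_apply, mul_ite, ite_mul, mul_one, one_mul, mul_zero, zero_mul,
    Finset.sum_ite_eq', Finset.mem_univ, if_true]
  simp only [← Equiv.comp_symm_eq, Finset.sum_ite_eq, Finset.mem_univ, if_true]
  rw [← Equiv.prod_comp s]
  simp

lemma psiMat_mem_brauerSet (Q : Matrix (Fin N) (Fin N) ℂ) (s : Equiv.Perm (Fin m)) :
    PsiMat s ∈ BrauerSet N m Q :=
  fun g _ => phiMat_mul_psiMat g s

end PsiMat

section Perm

lemma card_map_symm (s : Equiv.Perm (Fin r)) {I : Finset (Fin r)} (hI : I.card = l) :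
    (I.map s.symm.toEmbedding).card = l :=
  (card_map _).trans hI

variable (s : Equiv.Perm (Fin r)) (I : Finset (Fin r)) (hI : I.card = l)

/-- The permutation of the `V`-factors of `V̲_I^{⊗r}` induced by the place permutation `s`,
read through the increasing enumerations of `s⁻¹ I` and `I`. -/
noncomputable def tau : Equiv.Perm (Fin l) :=
  ((I.map s.symm.toEmbedding).orderIsoOfFin (card_map_symm s hI)).toEquiv.trans
    ((s.subtypeEquiv fun _ => mem_map_equiv).trans (I.orderIsoOfFin hI).toEquiv.symm)

lemma apply_orderIsoOfFin_map_symm (j : Fin l) :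
    s ((I.map s.symm.toEmbedding).orderIsoOfFin (card_map_symm s hI) j) =
      I.orderIsoOfFin hI (tau s I hI j) := by
  simp [tau]

lemma emb_comp_perm (a : Fin l → Fin n) :
    emb I hI a ∘ s = emb (I.map s.symm.toEmbedding) (card_map_symm s hI) (a ∘ tau s I hI) := by
  refine ((eq_emb_iff _ _).2 ⟨fun i => ?_, fun j => ?_⟩)
  · rw [mem_map_equiv, Equiv.symm_symm, Function.comp_apply, (isSupp_emb I hI a (s i))]
  · rw [Function.comp_apply, apply_orderIsoOfFin_map_symm, emb_orderIsoOfFin, Function.comp_apply]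

end Perm

lemma psiLevel_eq_sum_blockMat (s : Equiv.Perm (Fin r)) :
    PsiLevel (n := n) l s = ∑ K : {K : Finset (Fin r) // K.card = l},
      blockMat K.1 (K.1.map s.symm.toEmbedding) K.2 (card_map_symm s K.2)
        (PsiMat (tau s K.1 K.2)) := by
  ext k q
  rw [Matrix.sum_apply]
  by_cases hk : levelOf k = l
  · obtain ⟨K, hK, hsupp⟩ : ∃ (K : Finset (Fin r)) (_ : K.card = l), isSupp K k :=
      ⟨_, hk, fun i => by simp⟩
    obtain ⟨a, rfl⟩ := exists_eq_emb K hK hsupp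
    rw [Fintype.sum_eq_single ⟨K, hK⟩ fun K' hK' => blockMat_apply_of_not_isSupp _
      (fun h => hK' (Subtype.ext (h.unique hsupp))) q]
    rw [blockMat_emb_apply, Fintype.sum_eq_single (a ∘ tau s K hK) fun c hc => by
      simp [PsiMat, hc]]
    simp [PsiLevel, PsiMat, hk, emb_comp_perm]
  · rw [show PsiLevel (n := n) l s k q = 0 from if_neg fun h => hk h.1]
    exact (Finset.sum_eq_zero fun K _ => blockMat_apply_of_not_isSupp _
      (fun h => hk ((levelOf_eq_card h).trans K.2)) q).symm

lemma blockMat_mem_enhancedBrauerLevel {Q : Matrix (Fin n) (Fin n) ℂ} {I J : Finset (Fin r)}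
    (hI : I.card = l) (hJ : J.card = l) {B : Matrix (Fin l → Fin n) (Fin l → Fin n) ℂ}
    (hB : B ∈ BrauerSet n l Q) : blockMat I J hI hJ B ∈ enhancedBrauerLevel n r Q l := by
  obtain ⟨σ, rfl⟩ := Equiv.Perm.exists_map_finset_eq I J (hI.trans hJ.symm)
  -- `Ψ̲|_l(σ⁻¹)` carries `V̲_J` onto `V̲_I` up to the permutation `tau` of the `V`-factors,
  -- which is undone inside the Brauer algebra.
  have key : PsiLevel l σ.symm * opMat _ hJ (PsiMat (tau σ.symm I hI)⁻¹ * B) =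
      blockMat I _ hI hJ B := by
    rw [psiLevel_eq_sum_blockMat, Finset.sum_mul, opMat_eq_blockMat,
      Fintype.sum_eq_single ⟨I, hI⟩ fun K hK => ?_]
    · rw [blockMat_mul_blockMat, if_pos (by simp), ← Matrix.mul_assoc, psiMat_mul,
        mul_inv_cancel, psiMat_one, Matrix.one_mul]
    · rw [blockMat_mul_blockMat, if_neg]
      simpa [Subtype.ext_iff] using hK
  rw [← key]
  exact mul_mem (NonUnitalAlgebra.subset_adjoin ℂ (Or.inl ⟨_, rfl⟩))
    (NonUnitalAlgebra.subset_adjoin ℂ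
      (Or.inr ⟨_, hJ, _, brauerSet_mul (psiMat_mem_brauerSet Q _) hB, rfl⟩))

theorem _root_.Submodule.mul_mem_span_of_mul_mem {R A : Type*} [CommSemiring R] [Semiring A]
    [Algebra R A] {s : Set A} (hs : ∀ x ∈ s, ∀ y ∈ s, x * y ∈ Submodule.span R s) {x y : A}
    (hx : x ∈ Submodule.span R s) (hy : y ∈ Submodule.span R s) :
    x * y ∈ Submodule.span R s := by
  have hle : Submodule.span R s * Submodule.span R s ≤ Submodule.span R s := by
    rw [Submodule.span_mul_span, Submodule.span_le]
    rintro _ ⟨x, hx, y, hy, rfl⟩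
    exact hs x hx y hy
  exact hle (Submodule.mul_mem_mul hx hy)

lemma span_blockFamily_eq_enhancedBrauerLevel {Q : Matrix (Fin n) (Fin n) ℂ} {ι : Type*}
    {b : ι → Matrix (Fin l → Fin n) (Fin l → Fin n) ℂ} (hb_mem : ∀ i, b i ∈ BrauerSet n l Q)
    (hb_span : ∀ A ∈ BrauerSet n l Q, A ∈ Submodule.span ℂ (Set.range b)) :
    Submodule.span ℂ (Set.range (blockFamily r b)) = (enhancedBrauerLevel n r Q l).toSubmodule := by
  set F := Submodule.span ℂ (Set.range (blockFamily r b))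
  have hblock : ∀ (I J : Finset (Fin r)) (hI : I.card = l) (hJ : J.card = l),
      ∀ A ∈ BrauerSet n l Q, blockMat I J hI hJ A ∈ F := by
    intro I J hI hJ A hA
    refine Submodule.span_mono ?_
      (Submodule.apply_mem_span_image_of_mem_span (blockMat I J hI hJ) (hb_span A hA))
    rintro _ ⟨_, ⟨i, rfl⟩, rfl⟩
    exact ⟨(i, ⟨I, hI⟩, ⟨J, hJ⟩), rfl⟩
  have hmul : ∀ x y, x ∈ F → y ∈ F → x * y ∈ F := fun x y =>
    Submodule.mul_mem_span_of_mul_mem <| by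
      rintro _ ⟨⟨i, I, J⟩, rfl⟩ _ ⟨⟨i', K, L⟩, rfl⟩
      rw [blockFamily, blockFamily, blockMat_mul_blockMat]
      split_ifs
      · exact hblock _ _ _ _ _ (brauerSet_mul (hb_mem i) (hb_mem i'))
      · exact zero_mem F
  refine le_antisymm (Submodule.span_le.2 ?_) fun x hx => ?_
  · rintro _ ⟨⟨i, I, J⟩, rfl⟩
    exact blockMat_mem_enhancedBrauerLevel I.2 J.2 (hb_mem i)
  · refine NonUnitalAlgebra.adjoin_le (S := F.toNonUnitalSubalgebra hmul) ?_ hx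
    rintro _ (⟨s, rfl⟩ | ⟨I, hI, A, hA, rfl⟩)
    · rw [psiLevel_eq_sum_blockMat]
      exact sum_mem fun K _ => hblock _ _ _ _ _ (psiMat_mem_brauerSet Q _)
    · rw [opMat_eq_blockMat]
      exact hblock _ _ _ _ _ hA

theorem enhancedBrauerLevel_basis_general {n r l : ℕ}
    (Q : Matrix (Fin n) (Fin n) ℂ) {ι : Type*}
    (b : ι → Matrix (Fin l → Fin n) (Fin l → Fin n) ℂ)
    (hb_indep : LinearIndependent ℂ b)
    (hb_mem : ∀ i, b i ∈ BrauerSet n l Q)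
    (hb_span : ∀ A ∈ BrauerSet n l Q, A ∈ Submodule.span ℂ (Set.range b)) :
    let fam : ι × {I : Finset (Fin r) // I.card = l} × {J : Finset (Fin r) // J.card = l} →
        Matrix (Fin r → Fin (n + 1)) (Fin r → Fin (n + 1)) ℂ :=
      fun p => EMat p.2.1.1 p.2.2.1 p.2.1.2 p.2.2.2 * opMat p.2.2.1 p.2.2.2 (b p.1)
    LinearIndependent ℂ fam ∧
      Submodule.span ℂ (Set.range fam) = (enhancedBrauerLevel n r Q l).toSubmodule := by
  simp only [eMat_mul_opMat]
  exact ⟨linearIndependent_blockFamily hb_indep,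
    span_blockFamily_eq_enhancedBrauerLevel hb_mem hb_span⟩

/-- Let `𝔅 = (b i)_{i : ι}` be a basis of the Brauer algebra
`B_l(εn) = End_G(V^{⊗l})`.  For `1 ≤ l ≤ r`, the family
`E_{IJ} ∘ b^J` (`b ∈ 𝔅`, `I, J ⊆ {1,…,r}`, `#I = #J = l`) is a basis of `B(ε,n,r)_l`:
it is linearly independent and spans `B(ε,n,r)_l`. -/
theorem enhancedBrauerLevel_basis {n r l : ℕ} (hl : 1 ≤ l) (hlr : l ≤ r)
    (Q : Matrix (Fin n) (Fin n) ℂ) {ι : Type*}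
    (b : ι → Matrix (Fin l → Fin n) (Fin l → Fin n) ℂ)
    (hb_indep : LinearIndependent ℂ b)
    (hb_mem : ∀ i, b i ∈ BrauerSet n l Q)
    (hb_span : ∀ A ∈ BrauerSet n l Q, A ∈ Submodule.span ℂ (Set.range b)) :
    let fam : ι × {I : Finset (Fin r) // I.card = l} × {J : Finset (Fin r) // J.card = l} →
        Matrix (Fin r → Fin (n + 1)) (Fin r → Fin (n + 1)) ℂ :=
      fun p => EMat p.2.1.1 p.2.2.1 p.2.1.2 p.2.2.2 * opMat p.2.2.1 p.2.2.2 (b p.1)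
    LinearIndependent ℂ fam ∧
      Submodule.span ℂ (Set.range fam) = (enhancedBrauerLevel n r Q l).toSubmodule :=
  enhancedBrauerLevel_basis_general Q b hb_indep hb_mem hb_span

end EnhancedBrauer
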